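/- For any rate R and relative distance δ ∈ (0,1/2) with R ≤ 1 - H₂(δ) - 1/m (strictly, with R < 1 - H₂(δ)), for sufficiently large m there exists a binary linear code of length m, dimension ⌈Rm⌉, and minimum relative distance greater than δ (Gilbert–Varshamov bound). -/

import Mathlib

/-- The binary entropy function `H₂(δ) = -δ log₂ δ - (1-δ) log₂ (1-δ)`. -/
noncomputable def binEnt (δ : ℝ) : ℝ :=
  -δ * Real.logb 2 δ - (1 - δ) * Real.logb 2 (1 - δ)

/-!
Varshamov's greedy construction. A linear code `C` all of whose nonzero words have weight `> d`
can be enlarged by any vector `x` at distance `> d` from every codeword, and such an `x` exists as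
long as the Hamming balls of radius `d` around the `q ^ dim C` codewords do not cover `F ^ m`.
For `d = ⌊δ m⌋` with `δ ≤ 1/2` a binary ball has at most `2 ^ (H₂(δ) m)` points, because every
weight `i ≤ δ m` has probability `δ ^ i (1 - δ) ^ (m - i) ≥ 2 ^ (-H₂(δ) m)` under the
`δ`-biased measure. Hence the construction reaches dimension `⌈R m⌉` once
`⌈R m⌉ + H₂(δ) m ≤ m`, which holds for large `m` because `R < 1 - H₂(δ)`.
-/

open Finset Real

theorem exists_forall_lt_hammingDist {ι β : Type*} [Fintype ι] [DecidableEq ι] [AddGroup β]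
    [Fintype β] [DecidableEq β] (S : Set (ι → β)) (d : ℕ)
    (h : Nat.card S * #{y : ι → β | hammingNorm y ≤ d} < Fintype.card (ι → β)) :
    ∃ x, ∀ c ∈ S, d < hammingDist x c := by
  classical
  have hcover : #(S.toFinset.biUnion fun c => ({y | hammingNorm y ≤ d} : Finset (ι → β)).map
      (addLeftEmbedding c)) < #(univ : Finset (ι → β)) := by
    refine (card_biUnion_le_card_mul _ _ _ fun c _ => (card_map _).le).trans_lt ?_
    rwa [Set.toFinset_card, ← Nat.card_eq_fintype_card]
  obtain ⟨x, -, hx⟩ := exists_mem_notMem_of_card_lt_card hcover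
  refine ⟨x, fun c hc => not_le.1 fun hxc => hx ?_⟩
  simp only [mem_biUnion, Set.mem_toFinset, mem_map, mem_filter, mem_univ, true_and]
  exact ⟨c, hc, -c + x, by rwa [← hammingDist_eq_hammingNorm, hammingDist_comm], by simp⟩

section Greedy

variable {ι F : Type*} [Fintype ι] [Field F] [DecidableEq F]

def MinWeightGT (C : Submodule F (ι → F)) (d : ℕ) : Prop :=
  ∀ c ∈ C, c ≠ 0 → d < hammingNorm c

theorem MinWeightGT.sup_span_singleton {C : Submodule F (ι → F)} {d : ℕ} {x : ι → F}
    (hC : MinWeightGT C d) (hx : ∀ c ∈ C, d < hammingDist x c) :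
    MinWeightGT (C ⊔ Submodule.span F {x}) d := by
  rintro _ hy hy0
  obtain ⟨c, hc, _, hax, rfl⟩ := Submodule.mem_sup.1 hy
  obtain ⟨a, rfl⟩ := Submodule.mem_span_singleton.1 hax
  rcases eq_or_ne a 0 with rfl | ha
  · rw [zero_smul, add_zero] at hy0 ⊢
    exact hC c hc hy0
  · calc d < hammingDist (-(a⁻¹ • c)) x := by
          rw [hammingDist_comm]; exact hx _ (C.neg_mem (C.smul_mem _ hc))
      _ = hammingNorm (a⁻¹ • (c + a • x)) := by
          rw [hammingDist_eq_hammingNorm, neg_neg, smul_add, inv_smul_smul₀ ha]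
      _ = hammingNorm (c + a • x) :=
          hammingNorm_smul (fun _ => (isUnit_iff_ne_zero.2 (inv_ne_zero ha)).isSMulRegular F) _

variable [DecidableEq ι] [Fintype F]

theorem exists_submodule_finrank_eq_minWeightGT (d k : ℕ)
    (h : Fintype.card F ^ k * #{y : ι → F | hammingNorm y ≤ d}
      ≤ Fintype.card F ^ Fintype.card ι) :
    ∃ C : Submodule F (ι → F), Module.finrank F C = k ∧ MinWeightGT C d := by
  induction k with
  | zero => exact ⟨⊥, finrank_bot F _, fun c hc hc0 => (hc0 ((Submodule.mem_bot F).1 hc)).elim⟩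
  | succ k ih =>
    have hq : 1 < Fintype.card F := Fintype.one_lt_card
    have hball : 0 < #{y : ι → F | hammingNorm y ≤ d} := card_pos.2 ⟨0, by simp⟩
    obtain ⟨C, hCk, hCd⟩ := ih <| le_trans
      (Nat.mul_le_mul_right _ (Nat.pow_le_pow_right (by omega) k.le_succ)) h
    have hcard : Nat.card C * #{y : ι → F | hammingNorm y ≤ d} < Fintype.card (ι → F) := by
      rw [Module.natCard_eq_pow_finrank (K := F), hCk, Nat.card_eq_fintype_card,
        Fintype.card_pi, prod_const, card_univ]
      exact lt_of_lt_of_le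
        (Nat.mul_lt_mul_of_pos_right (Nat.pow_lt_pow_right hq k.lt_succ_self) hball) h
    obtain ⟨x, hx⟩ := exists_forall_lt_hammingDist (C : Set (ι → F)) d hcard
    have hxC : x ∉ C := fun hxC => by simpa using hx x hxC
    exact ⟨C ⊔ Submodule.span F {x}, by rw [Submodule.finrank_sup_span_singleton hxC, hCk],
      hCd.sup_span_singleton hx⟩

end Greedy

theorem card_hammingNorm_le_le_sum_choose {ι : Type*} [Fintype ι] [DecidableEq ι] (d : ℕ) :
    #{y : ι → ZMod 2 | hammingNorm y ≤ d} ≤ ∑ i ∈ range (d + 1), (Fintype.card ι).choose i := by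
  have hsupp_inj : ∀ y z : ι → ZMod 2,
      ({i | y i ≠ 0} : Finset ι) = ({i | z i ≠ 0} : Finset ι) → y = z := by
    intro y z h
    funext i
    have hZMod2 : ∀ a b : ZMod 2, (a ≠ 0 ↔ b ≠ 0) → a = b := by decide
    exact hZMod2 _ _ (by simpa using congrArg (i ∈ ·) h)
  calc _ ≤ #((range (d + 1)).sigma fun i => powersetCard i (univ : Finset ι)) :=
        card_le_card_of_injOn
          (fun y => (⟨hammingNorm y, ({i | y i ≠ 0} : Finset ι)⟩ : (_ : ℕ) × Finset ι))
          (fun y hy => by simpa [Nat.lt_succ_iff, hammingNorm] using hy)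
          (fun y _ z _ hyz => hsupp_inj y z (Sigma.mk.inj_iff.1 hyz).2.eq)
    _ = _ := by simp [card_sigma, card_powersetCard]

section Entropy

variable {δ : ℝ}

theorem two_rpow_neg_binEnt_mul (hδ0 : 0 < δ) (hδ1 : δ < 1) (x : ℝ) :
    (2 : ℝ) ^ (-(binEnt δ * x)) = δ ^ (δ * x) * (1 - δ) ^ (x - δ * x) := by
  rw [show -(binEnt δ * x) = logb 2 δ * (δ * x) + logb 2 (1 - δ) * (x - δ * x) by
      unfold binEnt; ring,
    rpow_add two_pos, rpow_mul zero_le_two, rpow_mul zero_le_two,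
    rpow_logb two_pos (by norm_num) hδ0, rpow_logb two_pos (by norm_num) (by linarith)]

theorem rpow_mul_rpow_sub_le_of_le (hδ0 : 0 < δ) (hδ : δ ≤ 1 / 2) (x : ℝ) {a b : ℝ}
    (hab : a ≤ b) : δ ^ b * (1 - δ) ^ (x - b) ≤ δ ^ a * (1 - δ) ^ (x - a) := by
  have h1δ : 0 < 1 - δ := by linarith
  have hform : ∀ t : ℝ, δ ^ t * (1 - δ) ^ (x - t) = (1 - δ) ^ x * (δ / (1 - δ)) ^ t := fun t => by
    rw [rpow_sub h1δ, div_rpow hδ0.le h1δ.le]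
    field_simp
  rw [hform, hform]
  refine mul_le_mul_of_nonneg_left (rpow_le_rpow_of_exponent_ge (div_pos hδ0 h1δ) ?_ hab)
    (by positivity)
  rw [div_le_one h1δ]
  linarith

theorem sum_range_choose_le_two_rpow_binEnt (hδ0 : 0 < δ) (hδ : δ ≤ 1 / 2) (m : ℕ) :
    ∑ i ∈ range (⌊δ * m⌋₊ + 1), (m.choose i : ℝ) ≤ 2 ^ (binEnt δ * m) := by
  have h1δ : 0 < 1 - δ := by linarith
  have hfloor : ⌊δ * m⌋₊ ≤ m := Nat.floor_le_of_le (by nlinarith [m.cast_nonneg (α := ℝ)])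
  have hterm : ∀ i ∈ range (⌊δ * m⌋₊ + 1),
      (2 : ℝ) ^ (-(binEnt δ * m)) ≤ δ ^ i * (1 - δ) ^ (m - i) := by
    intro i hi
    have hi : i ≤ ⌊δ * m⌋₊ := Nat.lt_succ_iff.1 (mem_range.1 hi)
    rw [two_rpow_neg_binEnt_mul hδ0 (by linarith), ← rpow_natCast, ← rpow_natCast,
      Nat.cast_sub (hi.trans hfloor)]
    exact rpow_mul_rpow_sub_le_of_le hδ0 hδ _
      ((Nat.cast_le.2 hi).trans (Nat.floor_le (by positivity)))
  have hmass : ∑ i ∈ range (⌊δ * m⌋₊ + 1), δ ^ i * (1 - δ) ^ (m - i) * m.choose i ≤ 1 := calc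
    _ ≤ ∑ i ∈ range (m + 1), δ ^ i * (1 - δ) ^ (m - i) * m.choose i :=
        sum_le_sum_of_subset_of_nonneg (range_subset_range.2 (by omega))
          fun i _ _ => by positivity
    _ = (δ + (1 - δ)) ^ m := (add_pow _ _ _).symm
    _ = 1 := by rw [add_sub_cancel, one_pow]
  rw [← inv_inv ((2 : ℝ) ^ _), ← rpow_neg zero_le_two, ← one_div, le_div_iff₀ (by positivity),
    sum_mul]
  refine (sum_le_sum fun i hi => ?_).trans hmass
  rw [mul_comm]
  exact mul_le_mul_of_nonneg_right (hterm i hi) (Nat.cast_nonneg _)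

theorem card_hammingNorm_le_floor_le_two_rpow_binEnt (hδ0 : 0 < δ) (hδ : δ ≤ 1 / 2) (m : ℕ) :
    (#{y : Fin m → ZMod 2 | hammingNorm y ≤ ⌊δ * m⌋₊} : ℝ) ≤ 2 ^ (binEnt δ * m) := by
  have hball := card_hammingNorm_le_le_sum_choose (ι := Fin m) ⌊δ * m⌋₊
  rw [Fintype.card_fin] at hball
  exact_mod_cast (Nat.cast_le.2 hball).trans_eq (Nat.cast_sum _ _) |>.trans
    (sum_range_choose_le_two_rpow_binEnt hδ0 hδ m)

end Entropy

/-- Gilbert–Varshamov bound: for any rate `R > 0` and relative distance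
`δ ∈ (0, 1/2)` with `R < 1 - H₂(δ)`, for all sufficiently large `m` there
exists a binary linear code of length `m`, dimension `⌈R m⌉`, whose every
nonzero codeword has Hamming weight greater than `δ m`. -/
theorem gilbert_varshamov (R δ : ℝ) (hδ : δ ∈ Set.Ioo (0 : ℝ) (1 / 2))
    (hR : 0 < R) (hRδ : R < 1 - binEnt δ) :
    ∃ M : ℕ, ∀ m : ℕ, M ≤ m →
      ∃ C : Submodule (ZMod 2) (Fin m → ZMod 2),
        Module.finrank (ZMod 2) C = ⌈R * m⌉₊ ∧
        ∀ c ∈ C, c ≠ 0 → δ * m < (hammingNorm c : ℝ) := by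
  obtain ⟨hδ0, hδ⟩ := hδ
  obtain ⟨M, hM⟩ := exists_nat_gt (1 / (1 - binEnt δ - R))
  refine ⟨M, fun m hm => ?_⟩
  have hexp : (⌈R * m⌉₊ : ℝ) + binEnt δ * m ≤ m := by
    have hgap : 1 ≤ (1 - binEnt δ - R) * m := by
      rw [div_lt_iff₀ (by linarith)] at hM
      nlinarith [(Nat.cast_le (α := ℝ)).2 hm]
    linarith [Nat.ceil_lt_add_one (by positivity : 0 ≤ R * m)]
  have hvolume : (2 : ℝ) ^ ⌈R * m⌉₊ * #{y : Fin m → ZMod 2 | hammingNorm y ≤ ⌊δ * m⌋₊}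
      ≤ 2 ^ m := calc
    _ ≤ (2 : ℝ) ^ (⌈R * m⌉₊ : ℝ) * 2 ^ (binEnt δ * m) := by
      rw [rpow_natCast]
      gcongr
      exact card_hammingNorm_le_floor_le_two_rpow_binEnt hδ0 hδ.le m
    _ ≤ 2 ^ (m : ℝ) := by
      rw [← rpow_add two_pos]
      exact rpow_le_rpow_of_exponent_le one_le_two hexp
    _ = 2 ^ m := rpow_natCast _ _
  obtain ⟨C, hCk, hCd⟩ := exists_submodule_finrank_eq_minWeightGT (ι := Fin m) (F := ZMod 2)
    ⌊δ * m⌋₊ ⌈R * m⌉₊ (by simpa using (by exact_mod_cast hvolume : 2 ^ _ * _ ≤ 2 ^ m))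
  exact ⟨C, hCk, fun c hc hc0 => (Nat.floor_lt (by positivity)).1 (hCd c hc hc0)⟩
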